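/- Let f(t) = (α + βt)·e^{−πt²} and g(t) = (γ + δt)·e^{−πt²} with α, β, γ, δ ∈ ℂ (i.e., f and g are linear combinations of the Hermite functions h_0 and h_1). If it is not the case that β = 0 and δ = 0 (i.e., f and g are not both multiples of h_0), then the Wigner distribution W(f,g) has a zero: there exists (x,ξ) ∈ ℝ² with W(f,g)(x,ξ) = 0. -/

import Mathlib

/-!
Writing `z = x + iξ`, the integrand of `W(f,g)(x,ξ)` is `e^{-2πx²}` times a product of two linear
polynomials in `t` times the Gaussian `exp(-πt²/2 - 2πiξt)`. A quadratic `P` integrates to zero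
against such a Gaussian as soon as `P(t) e^{bt² + ct}` is the derivative of `(p + qt) e^{bt² + ct}`;
for the Wigner integrand this single condition on the coefficients reads
`4π (α + β z̄)(γ̄ + δ̄ z) = β δ̄`. If `β = 0` or `δ = 0` it is a linear equation in `z` or `z̄`;
otherwise, dividing by `β δ̄` and translating `z`, it becomes `(w̄ + m) w = 1/(4π)`, which is solved
by `w = s e^{-i arg m}` with `s² + |m| s = 1/(4π)`.
-/

open MeasureTheory Complex

/-- The cross-Wigner distribution of `f, g : ℝ → ℂ`. -/
noncomputable def wigner (f g : ℝ → ℂ) (x ξ : ℝ) : ℂ :=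
  ∫ t : ℝ, f (x + t / 2) * (starRingEnd ℂ) (g (x - t / 2)) *
    Complex.exp (-2 * Real.pi * Complex.I * ξ * t)

open scoped Nat

lemma hasDerivAt_cexp_quadratic (b c : ℂ) (t : ℝ) :
    HasDerivAt (fun t : ℝ => cexp (b * t ^ 2 + c * t))
      ((2 * b * t + c) * cexp (b * t ^ 2 + c * t)) t := by
  have hq : HasDerivAt (fun z : ℂ => b * z ^ 2 + c * z) (2 * b * t + c) t := by
    refine (((hasDerivAt_pow 2 (t : ℂ)).const_mul b).fun_add
      ((hasDerivAt_id (t : ℂ)).const_mul c)).congr_deriv ?_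
    push_cast
    ring
  simpa [mul_comm] using hq.cexp.comp_ofReal

section GaussianQuadratic

variable {b : ℂ} (c : ℂ)

lemma norm_cexp_quadratic_add_mul (t s : ℝ) :
    ‖cexp (b * t ^ 2 + (c + s) * t)‖ = ‖cexp (b * t ^ 2 + c * t)‖ * Real.exp (s * t) := by
  rw [show b * t ^ 2 + (c + s) * t = b * t ^ 2 + c * t + ((s * t : ℝ) : ℂ) by push_cast; ring,
    Complex.exp_add, norm_mul, norm_exp_ofReal]

lemma integrable_pow_mul_cexp_quadratic (hb : b.re < 0) (k : ℕ) :
    Integrable fun t : ℝ => (t : ℂ) ^ k * cexp (b * t ^ 2 + c * t) := by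
  have hnorm (s : ℝ) : Integrable fun t : ℝ => ‖cexp (b * t ^ 2 + (c + s) * t)‖ := by
    simpa using (integrable_cexp_quadratic' hb (c + s) 0).norm
  refine (((hnorm 1).add (hnorm (-1))).const_mul (k ! : ℝ)).mono' (by fun_prop)
    (ae_of_all _ fun t => ?_)
  have hpow : |t| ^ k ≤ k ! * Real.exp |t| :=
    (div_le_iff₀' (by positivity)).mp (Real.pow_div_factorial_le_exp _ (abs_nonneg t) k)
  calc ‖(t : ℂ) ^ k * cexp (b * t ^ 2 + c * t)‖
      = |t| ^ k * ‖cexp (b * t ^ 2 + c * t)‖ := by simp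
    _ ≤ k ! * (Real.exp t + Real.exp (-t)) * ‖cexp (b * t ^ 2 + c * t)‖ := by
      gcongr
      exact hpow.trans (by gcongr; exact Real.exp_abs_le t)
    _ = _ := by
      simp only [Pi.add_apply, norm_cexp_quadratic_add_mul, one_mul, neg_one_mul]
      ring

lemma integrable_quadratic_mul_cexp_quadratic (hb : b.re < 0) (u v w : ℂ) :
    Integrable fun t : ℝ => (u + v * t + w * t ^ 2) * cexp (b * t ^ 2 + c * t) := by
  have h := integrable_pow_mul_cexp_quadratic c hb
  refine ((((h 0).const_mul u).add ((h 1).const_mul v)).add ((h 2).const_mul w)).congr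
    (ae_of_all _ fun t => ?_)
  simp only [Pi.add_apply]
  ring

lemma integral_mul_mul_cexp_quadratic_eq_zero (hb : b.re < 0) {A B C D : ℂ}
    (h : 4 * b ^ 2 * (A * C) - 2 * b * (c * (A * D + B * C) + B * D) + c ^ 2 * (B * D) = 0) :
    ∫ t : ℝ, (A + B * t) * (C + D * t) * cexp (b * t ^ 2 + c * t) = 0 := by
  have hb0 : b ≠ 0 := by rintro rfl; simp at hb
  set F : ℝ → ℂ := fun t => cexp (b * t ^ 2 + c * t)
  set q := B * D / (2 * b)
  set p := (A * D + B * C - q * c) / (2 * b)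
  have hderiv (t : ℝ) : HasDerivAt (fun t : ℝ => (p + q * t) * F t)
      ((p + q * t) * ((2 * b * t + c) * F t) + q * F t) t := by
    have hlin : HasDerivAt (fun t : ℝ => p + q * (t : ℂ)) q t := by
      simpa using ((hasDerivAt_id t).ofReal_comp.const_mul q).const_add p
    refine (hlin.fun_mul (hasDerivAt_cexp_quadratic b c t)).congr_deriv ?_
    ring
  have hpoly (t : ℝ) : (A + B * t) * (C + D * t) * F t
      = (p + q * t) * ((2 * b * t + c) * F t) + q * F t := by
    simp only [p, q]
    field_simp
    linear_combination F t * h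
  change ∫ t : ℝ, (A + B * t) * (C + D * t) * F t = 0
  simp_rw [hpoly]
  refine integral_eq_zero_of_hasDerivAt_of_integrable hderiv ?_ ?_
  · refine (integrable_quadratic_mul_cexp_quadratic c hb (q + p * c) (q * c + 2 * b * p)
      (2 * b * q)).congr (ae_of_all _ fun t => ?_)
    simp only [F]
    ring
  · refine (integrable_quadratic_mul_cexp_quadratic c hb p q 0).congr (ae_of_all _ fun t => ?_)
    simp only [F]
    ring

end GaussianQuadratic

open ComplexConjugate

lemma exists_conj_add_mul_eq_ofReal (m : ℂ) {ρ : ℝ} (hρ : 0 ≤ ρ) :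
    ∃ w : ℂ, (conj w + m) * w = ρ := by
  set u := cexp (((-arg m : ℝ) : ℂ) * I)
  have hmu : m * u = ‖m‖ := by
    rw [← norm_mul_exp_arg_mul_I m, mul_assoc, ← Complex.exp_add]
    simp
  have huu : conj u * u = 1 := by
    rw [conj_mul', norm_exp_ofReal_mul_I]
    simp
  obtain ⟨s, hs⟩ : ∃ s : ℝ, s ^ 2 + ‖m‖ * s = ρ := by
    refine ⟨(√(‖m‖ ^ 2 + 4 * ρ) - ‖m‖) / 2, ?_⟩
    linear_combination Real.sq_sqrt (by positivity : 0 ≤ ‖m‖ ^ 2 + 4 * ρ) / 4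
  have hsC : (s : ℂ) ^ 2 + ‖m‖ * s = ρ := by exact_mod_cast hs
  refine ⟨s * u, ?_⟩
  rw [map_mul, conj_ofReal]
  linear_combination (s : ℂ) ^ 2 * huu + (s : ℂ) * hmu + hsC

lemma exists_linear_conj_mul_linear_eq (α β γ δ : ℂ) (h : ¬(β = 0 ∧ δ = 0)) :
    ∃ z : ℂ, 4 * Real.pi * ((α + β * conj z) * (γ + δ * z)) = β * δ := by
  have hπ : (Real.pi : ℂ) ≠ 0 := ofReal_ne_zero.mpr Real.pi_ne_zero
  by_cases hβ : β = 0
  · have hδ : δ ≠ 0 := fun hδ => h ⟨hβ, hδ⟩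
    refine ⟨-γ / δ, ?_⟩
    rw [hβ]
    field_simp
    ring
  by_cases hδ : δ = 0
  · refine ⟨conj (-α / β), ?_⟩
    rw [hδ, conj_conj]
    field_simp
    ring
  obtain ⟨w, hw⟩ := exists_conj_add_mul_eq_ofReal (α / β - conj (γ / δ))
    (by positivity : 0 ≤ 1 / (4 * Real.pi))
  refine ⟨w - γ / δ, ?_⟩
  rw [map_sub]
  push_cast at hw
  field_simp at hw ⊢
  linear_combination δ * hw

lemma wigner_linear_mul_gaussian (α β γ δ : ℂ) (x ξ : ℝ) :
    wigner (fun t => (α + β * t) * cexp (-Real.pi * t ^ 2))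
      (fun t => (γ + δ * t) * cexp (-Real.pi * t ^ 2)) x ξ
      = cexp (-2 * Real.pi * x ^ 2) * ∫ t : ℝ,
        (α + β * x + β / 2 * t) * (conj γ + conj δ * x + -conj δ / 2 * t) *
          cexp (-(Real.pi / 2) * t ^ 2 + -2 * Real.pi * I * ξ * t) := by
  rw [wigner, ← integral_const_mul]
  congr 1 with t
  simp only [map_mul, map_add, map_neg, map_pow, ← Complex.exp_conj, conj_ofReal]
  rw [mul_mul_mul_comm, mul_assoc, ← Complex.exp_add, ← Complex.exp_add, mul_left_comm,
    ← Complex.exp_add]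
  push_cast
  ring_nf

theorem wigner_hermite01_has_zero (α β γ δ : ℂ) (h : ¬(β = 0 ∧ δ = 0)) :
    ∃ x ξ : ℝ, wigner
      (fun t => (α + β * t) * Complex.exp (-Real.pi * t ^ 2))
      (fun t => (γ + δ * t) * Complex.exp (-Real.pi * t ^ 2)) x ξ = 0 := by
  obtain ⟨z, hz⟩ := exists_linear_conj_mul_linear_eq α β (conj γ) (conj δ) (by simpa using h)
  refine ⟨z.re, z.im, ?_⟩
  rw [wigner_linear_mul_gaussian, integral_mul_mul_cexp_quadratic_eq_zero, mul_zero]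
  · simpa using Real.pi_pos
  · rw [← re_add_im z] at hz
    simp only [map_add, map_mul, conj_ofReal, conj_I] at hz
    linear_combination (Real.pi / 4 : ℂ) * hz
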